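/- Let f, g ∈ A be nonzero, with f depending only on the variables u and u_{10} and g depending only on u and u_{01}. Consider the master-formula λ-bracket with generator coefficients P_{(1,0)} = f, P_{(0,1)} = g, P_{(−1,0)} = −S₁^{−1}(f), P_{(0,−1)} = −S₂^{−1}(g), and P_T = 0 otherwise. If this λ-bracket satisfies the PVA-Jacobi identity for the triple (u, u, u), then f·S₁^{−1}(∂f/∂u_{10}) = S₁^{−1}(f)·(∂f/∂u) and g·S₂^{−1}(∂g/∂u_{01}) = S₂^{−1}(g)·(∂g/∂u). -/

import Mathlib

open MvPolynomial

namespace MPVA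

/-- The algebra of difference polynomials in `ℓ` generators on a `D`-dimensional lattice:
polynomials over `ℂ` in the variables `u^i_N`, `i ∈ Fin ℓ`, `N ∈ ℤ^D`. -/
abbrev A (ℓ D : ℕ) := MvPolynomial (Fin ℓ × (Fin D → ℤ)) ℂ

variable {ℓ D : ℕ}

/-- The shift automorphism `S^M` sending `u^i_N` to `u^i_{N+M}`. -/
noncomputable def Sh (M : Fin D → ℤ) : A ℓ D ≃ₐ[ℂ] A ℓ D :=
  renameEquiv ℂ ((Equiv.refl (Fin ℓ)).prodCongr (Equiv.addRight M))

/-- The `α`-th standard basis vector `E_α ∈ ℤ^D`. -/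
def E (α : Fin D) : Fin D → ℤ := fun β => if β = α then 1 else 0

/-- Coefficient `B_T(f,g)` of `λ^T` in the master-formula λ-bracket `{f_λ g}` determined
by the generator coefficients `{u^i_λ u^j} = Σ_T (P j i T)·λ^T`:
`{f_λ g} = Σ_{i,j,M,N,T'} (∂g/∂u^j_N)·S^N(P^{ji}_{T'})·S^{N+T'−M}(∂f/∂u^i_M)·λ^{N+T'−M}`. -/
noncomputable def B (P : Fin ℓ → Fin ℓ → (Fin D → ℤ) → A ℓ D)
    (T : Fin D → ℤ) (f g : A ℓ D) : A ℓ D :=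
  ∑ᶠ (i : Fin ℓ) (j : Fin ℓ) (M : Fin D → ℤ) (N : Fin D → ℤ),
    (pderiv (j, N) g) * (Sh N (P j i (T - N + M))) * (Sh T (pderiv (i, M) f))

/-- The family of generator coefficients has only finitely many nonzero members. -/
def FinSupp (P : Fin ℓ → Fin ℓ → (Fin D → ℤ) → A ℓ D) : Prop :=
  {x : (Fin ℓ × Fin ℓ) × (Fin D → ℤ) | P x.1.1 x.1.2 x.2 ≠ 0}.Finite

/-- The PVA-Jacobi identity for the triple `(f,g,h)`, written coefficient-wise
(for all `T, U ∈ ℤ^D`, the coefficient of `λ^T μ^U` in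
`Σ_U {f_λ B_U(g,h)}μ^U − Σ_T {g_μ B_T(f,h)}λ^T = Σ_{T,U} B_U(B_T(f,g),h)λ^{T+U}μ^U`). -/
def Jacobi (P : Fin ℓ → Fin ℓ → (Fin D → ℤ) → A ℓ D) (f g h : A ℓ D) : Prop :=
  ∀ T U : Fin D → ℤ,
    B P T f (B P U g h) - B P U g (B P T f h) = B P U (B P (T - U) f g) h

/-- For `D = 2`: the lattice point `(m,n) ∈ ℤ²`. -/
def v (m n : ℤ) : Fin 2 → ℤ := ![m, n]

/-- For `D = 2`, `ℓ = 1`: the variable `u_{mn}` of the scalar two-dimensional algebra. -/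
noncomputable def uu (m n : ℤ) : A 1 2 := X ((0 : Fin 1), v m n)

/-- Generator coefficients of the scalar two-dimensional first-order operator
`P = f·S₁ + g·S₂ − S₂^{−1}∘g − S₁^{−1}∘f`. -/
noncomputable def P1 (f g : A 1 2) : Fin 1 → Fin 1 → (Fin 2 → ℤ) → A 1 2 :=
  fun _ _ T =>
    if T = v 1 0 then f
    else if T = v 0 1 then g
    else if T = v (-1) 0 then -(Sh (v (-1) 0) f)
    else if T = v 0 (-1) then -(Sh (v 0 (-1)) g)
    else 0

/-! Take the coefficient of `λ^{2e} μ^e` in the Jacobi identity for `(u, u, u)`, with `e = E₁`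
or `e = E₂`. Since `P_{2e} = 0` and `P_e` depends only on `u` and `u_e`, each of the three
brackets keeps a single term, and the identity reduces to
`∂P_e/∂u_e · S^e(P_e) = P_e · S^e(∂P_e/∂u)`; applying `S^{-e}` gives the claim. -/

section Shift

variable {ℓ D : ℕ}

theorem Sh_Sh (M N : Fin D → ℤ) (x : A ℓ D) : Sh M (Sh N x) = Sh (N + M) x := by
  simp only [Sh, renameEquiv_apply, rename_rename]
  congr 1
  ext ⟨i, K⟩
  simp [add_assoc]

theorem Sh_zero (x : A ℓ D) : Sh (0 : Fin D → ℤ) x = x := by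
  simp only [Sh, renameEquiv_apply]
  conv_rhs => rw [← rename_id_apply (R := ℂ) x]
  congr 1
  ext ⟨i, K⟩
  simp

theorem Sh_neg_Sh (M : Fin D → ℤ) (x : A ℓ D) : Sh (-M) (Sh M x) = x := by
  rw [Sh_Sh, add_neg_cancel, Sh_zero]

end Shift

section Bracket

variable {ℓ D : ℕ} (P : Fin ℓ → Fin ℓ → (Fin D → ℤ) → A ℓ D)

theorem B_zero_right (T : Fin D → ℤ) (f : A ℓ D) : B P T f 0 = 0 := by
  simp [B]

end Bracket

section ScalarBracket

variable {D : ℕ} (P : Fin 1 → Fin 1 → (Fin D → ℤ) → A 1 D)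

theorem pderiv_X_zero (N : Fin D → ℤ) :
    pderiv ((0 : Fin 1), N) (X 0 : A 1 D) = if N = 0 then 1 else 0 := by
  classical
  rw [pderiv_X, Pi.single_apply]
  simp [Prod.ext_iff, eq_comm]

theorem B_X_left (T : Fin D → ℤ) (h : A 1 D) :
    B P T (X 0) h = ∑ᶠ N, pderiv ((0 : Fin 1), N) h * Sh N (P 0 0 (T - N)) := by
  rw [B, finsum_unique, finsum_unique, finsum_eq_single _ (0 : Fin D → ℤ)]
  · simp only [Fin.default_eq_zero, pderiv_X_zero, if_pos, map_one, mul_one, add_zero]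
  · intro M hM
    simp [hM]

theorem B_X_right (T : Fin D → ℤ) (q : A 1 D) :
    B P T q (X 0) = ∑ᶠ M, P 0 0 (T + M) * Sh T (pderiv ((0 : Fin 1), M) q) := by
  rw [B, finsum_unique, finsum_unique]
  refine finsum_congr fun M => ?_
  rw [finsum_eq_single _ (0 : Fin D → ℤ)]
  · simp only [Fin.default_eq_zero, pderiv_X_zero, if_pos, one_mul, Sh_zero, sub_zero]
  · intro N hN
    simp [hN]

theorem B_X_X (T : Fin D → ℤ) : B P T (X 0) (X 0) = P 0 0 T := by
  rw [B_X_left, finsum_eq_single _ (0 : Fin D → ℤ)]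
  · rw [pderiv_X_zero, if_pos rfl, one_mul, Sh_zero, sub_zero]
  · intro N hN
    rw [pderiv_X_zero, if_neg hN, zero_mul]

variable {P} {e : Fin D → ℤ}

theorem B_X_left_double (h2e : P 0 0 (e + e) = 0)
    (hdep : ∀ N, N ≠ 0 → N ≠ e → pderiv ((0 : Fin 1), N) (P 0 0 e) = 0) :
    B P (e + e) (X 0) (P 0 0 e) = pderiv ((0 : Fin 1), e) (P 0 0 e) * Sh e (P 0 0 e) := by
  rw [B_X_left, finsum_eq_single _ e, add_sub_cancel_right]
  intro N hN
  by_cases hN0 : N = 0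
  · rw [hN0, sub_zero, h2e, map_zero, mul_zero]
  · rw [hdep N hN0 hN, zero_mul]

theorem B_X_right_self (h2e : P 0 0 (e + e) = 0)
    (hdep : ∀ N, N ≠ 0 → N ≠ e → pderiv ((0 : Fin 1), N) (P 0 0 e) = 0) :
    B P e (P 0 0 e) (X 0) = P 0 0 e * Sh e (pderiv ((0 : Fin 1), 0) (P 0 0 e)) := by
  rw [B_X_right, finsum_eq_single _ 0, add_zero]
  intro M hM
  by_cases hMe : M = e
  · rw [hMe, h2e, zero_mul]
  · rw [hdep M hM hMe, map_zero, mul_zero]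

theorem Jacobi.functional_equation (hJ : Jacobi P (X 0) (X 0) (X 0))
    (h2e : P 0 0 (e + e) = 0)
    (hdep : ∀ N, N ≠ 0 → N ≠ e → pderiv ((0 : Fin 1), N) (P 0 0 e) = 0) :
    P 0 0 e * Sh (-e) (pderiv ((0 : Fin 1), e) (P 0 0 e)) =
      Sh (-e) (P 0 0 e) * pderiv ((0 : Fin 1), 0) (P 0 0 e) := by
  have hcoeff := hJ (e + e) e
  rw [B_X_X, B_X_X, B_X_X, h2e, B_zero_right, sub_zero, add_sub_cancel_right,
    B_X_left_double h2e hdep, B_X_right_self h2e hdep] at hcoeff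
  have hshift := congrArg (Sh (-e)) hcoeff
  rwa [map_mul, map_mul, Sh_neg_Sh, Sh_neg_Sh, mul_comm] at hshift

end ScalarBracket

section Plane

theorem v_zero : v 0 0 = 0 := by
  funext i; fin_cases i <;> rfl

theorem v_inj {a b c d : ℤ} : v a b = v c d ↔ a = c ∧ b = d :=
  ⟨fun h => ⟨congrFun h 0, congrFun h 1⟩, by rintro ⟨rfl, rfl⟩; rfl⟩

theorem v_add (a b c d : ℤ) : v a b + v c d = v (a + c) (b + d) := by
  funext i; fin_cases i <;> simp [v]

theorem v_neg (a b : ℤ) : -v a b = v (-a) (-b) := by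
  funext i; fin_cases i <;> simp [v]

theorem exists_eq_v (N : Fin 2 → ℤ) : ∃ m n, N = v m n :=
  ⟨N 0, N 1, by funext i; fin_cases i <;> rfl⟩

theorem uu_zero : uu 0 0 = X 0 := by
  rw [uu, v_zero]; rfl

theorem pderiv_eq_zero_of_forall_v {q : A 1 2} {m₀ n₀ : ℤ}
    (hdep : ∀ m n : ℤ, ¬(m = 0 ∧ n = 0) → ¬(m = m₀ ∧ n = n₀) →
      pderiv ((0 : Fin 1), v m n) q = 0) :
    ∀ N, N ≠ 0 → N ≠ v m₀ n₀ → pderiv ((0 : Fin 1), N) q = 0 := by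
  intro N hN0 hN
  obtain ⟨m, n, rfl⟩ := exists_eq_v N
  rw [← v_zero, Ne, v_inj] at hN0
  rw [Ne, v_inj] at hN
  exact hdep m n hN0 hN

end Plane

theorem first_order_functional_equation_general (f g : A 1 2)
    (hfdep : ∀ m n : ℤ, ¬(m = 0 ∧ n = 0) → ¬(m = 1 ∧ n = 0) →
      pderiv ((0 : Fin 1), v m n) f = 0)
    (hgdep : ∀ m n : ℤ, ¬(m = 0 ∧ n = 0) → ¬(m = 0 ∧ n = 1) →
      pderiv ((0 : Fin 1), v m n) g = 0)
    (hJ : Jacobi (P1 f g) (uu 0 0) (uu 0 0) (uu 0 0)) :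
    f * Sh (v (-1) 0) (pderiv ((0 : Fin 1), v 1 0) f) =
      Sh (v (-1) 0) f * pderiv ((0 : Fin 1), v 0 0) f ∧
    g * Sh (v 0 (-1)) (pderiv ((0 : Fin 1), v 0 1) g) =
      Sh (v 0 (-1)) g * pderiv ((0 : Fin 1), v 0 0) g := by
  rw [uu_zero] at hJ
  have hf : P1 f g 0 0 (v 1 0) = f := by norm_num [P1, v_inj]
  have hg : P1 f g 0 0 (v 0 1) = g := by norm_num [P1, v_inj]
  have hf2 : P1 f g 0 0 (v 1 0 + v 1 0) = 0 := by norm_num [P1, v_add, v_inj]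
  have hg2 : P1 f g 0 0 (v 0 1 + v 0 1) = 0 := by norm_num [P1, v_add, v_inj]
  have hfeq := hJ.functional_equation hf2 (hf ▸ pderiv_eq_zero_of_forall_v hfdep)
  have hgeq := hJ.functional_equation hg2 (hg ▸ pderiv_eq_zero_of_forall_v hgdep)
  rw [hf, v_neg, neg_zero] at hfeq
  rw [hg, v_neg, neg_zero] at hgeq
  rw [v_zero]
  exact ⟨hfeq, hgeq⟩

/-- if `f = f(u,u_{10})`, `g = g(u,u_{01})` are nonzero and the λ-bracket of
the first-order operator satisfies the PVA-Jacobi identity for `(u,u,u)`, then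
`f·S₁^{−1}(∂f/∂u_{10}) = S₁^{−1}(f)·(∂f/∂u)` and
`g·S₂^{−1}(∂g/∂u_{01}) = S₂^{−1}(g)·(∂g/∂u)`. -/
theorem first_order_functional_equation (f g : A 1 2) (hf : f ≠ 0) (hg : g ≠ 0)
    (hfdep : ∀ m n : ℤ, ¬(m = 0 ∧ n = 0) → ¬(m = 1 ∧ n = 0) →
      pderiv ((0 : Fin 1), v m n) f = 0)
    (hgdep : ∀ m n : ℤ, ¬(m = 0 ∧ n = 0) → ¬(m = 0 ∧ n = 1) →
      pderiv ((0 : Fin 1), v m n) g = 0)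
    (hJ : Jacobi (P1 f g) (uu 0 0) (uu 0 0) (uu 0 0)) :
    f * Sh (v (-1) 0) (pderiv ((0 : Fin 1), v 1 0) f) =
      Sh (v (-1) 0) f * pderiv ((0 : Fin 1), v 0 0) f ∧
    g * Sh (v 0 (-1)) (pderiv ((0 : Fin 1), v 0 1) g) =
      Sh (v 0 (-1)) g * pderiv ((0 : Fin 1), v 0 0) g :=
  first_order_functional_equation_general f g hfdep hgdep hJ

end MPVA
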